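/- Let A be a unital associative ring of prime characteristic p and let x, b ∈ A satisfy [x, b] = b. Then for every natural number m, the iterated commutator [b², x², ..., x²] with x² appearing pᵐ times equals (-4)^(pᵐ) b² (x^(pᵐ) + 1). -/

import Mathlib

/-!
From `[x, b] = b` we get `x b = b (x + 1)`, hence `x b² = b² (x + 2)` and `x² b² = b² (x + 2)²`.
So each bracket with `x²` multiplies `b² u` (for `u` commuting with `x`) on the right by
`x² - (x + 2)² = -4 (x + 1)`, and after `pᵐ` steps Frobenius turns `(x + 1)^(pᵐ)` into `x^(pᵐ) + 1`.
-/

/-- The left-normed iterated Lie commutator `[a, b, b, ..., b]` (`n` copies of `b`). -/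
def lieIter {A : Type*} [Ring A] (a b : A) : ℕ → A
  | 0 => a
  | n + 1 => lieIter a b n * b - b * lieIter a b n

theorem lieIter_eq_mul_sub_pow {A : Type*} [Ring A] {a y z : A} (hsemi : y * a = a * z)
    (hyz : Commute y z) (n : ℕ) : lieIter a y n = a * (y - z) ^ n := by
  induction n with
  | zero => simp [lieIter]
  | succ n ih =>
    have hz : Commute z ((y - z) ^ n) := (hyz.symm.sub_right (Commute.refl z)).pow_right n
    calc lieIter a y (n + 1) = a * (y - z) ^ n * y - y * a * (y - z) ^ n := by
          rw [lieIter, ih, mul_assoc y]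
      _ = a * ((y - z) ^ n * y - z * (y - z) ^ n) := by rw [hsemi]; noncomm_ring
      _ = a * (y - z) ^ (n + 1) := by rw [hz.eq, ← mul_sub, pow_succ]

theorem mul_pow_eq_pow_mul_add_natCast {A : Type*} [Ring A] {x b : A} (h : x * b = b * (x + 1))
    (n : ℕ) : x * b ^ n = b ^ n * (x + n) := by
  induction n with
  | zero => simp
  | succ n ih =>
    calc x * b ^ (n + 1) = b ^ n * (x * b) + b ^ n * (n * b) := by
          rw [pow_succ, ← mul_assoc, ih, mul_add, add_mul, mul_assoc, mul_assoc]
      _ = b ^ (n + 1) * (x + (n + 1 : ℕ)) := by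
          rw [h, (Nat.cast_commute n b).eq, pow_succ]; push_cast; noncomm_ring

/-- in a unital associative ring of prime characteristic `p`, if
`[x, b] = b`, then `[b², x², ..., x²]` (with `x²` appearing `pᵐ` times) equals
`(-4)^(pᵐ) b² (x^(pᵐ) + 1)`. -/
theorem stmt18 (A : Type*) [Ring A] (p : ℕ) [Fact p.Prime] [CharP A p]
    (x b : A) (h : x * b - b * x = b) (m : ℕ) :
    lieIter (b ^ 2) (x ^ 2) (p ^ m) = (-4 : A) ^ (p ^ m) * b ^ 2 * (x ^ (p ^ m) + 1) := by
  have hxb : x * b = b * (x + 1) := by rw [mul_add, mul_one, ← sub_eq_iff_eq_add', h]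
  have hsemi : x ^ 2 * b ^ 2 = b ^ 2 * (x + 2) ^ 2 :=
    (SemiconjBy.pow_right (mul_pow_eq_pow_mul_add_natCast hxb 2).symm 2).symm
  have hcomm : Commute (x ^ 2) ((x + 2) ^ 2) :=
    ((Commute.refl x).add_right (Commute.ofNat_right x 2)).pow_pow 2 2
  have hdiff : x ^ 2 - (x + 2) ^ 2 = (-4 : A) * (x + 1) := by noncomm_ring; simp
  have h4 : ∀ c : A, Commute (-4 : A) c := fun c => (Commute.ofNat_left 4 c).neg_left
  rw [lieIter_eq_mul_sub_pow hsemi hcomm, hdiff, (h4 _).mul_pow,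
    add_pow_char_pow_of_commute p m (Commute.one_right x), one_pow, ← mul_assoc,
    ((h4 _).pow_left _).symm.eq]
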